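/- Let R be a Noetherian ring, I ⊂ R an ideal, and f ∈ R an element such that I^j : f = I^j for all j ≥ 0. Then there exists an integer k > 0 such that (C(I), f^k) ⊆ C((I, f)), where (I, f) denotes I + (f) and (C(I), f^k) denotes C(I) + (f^k). In particular, if I is of linear type (C(I) = R), then (I, f) is of linear type. -/

import Mathlib

noncomputable section

universe u v

/-- The `R`-algebra map `φ : T = R[y_i : i ∈ ι] → R[t]` sending `y_i ↦ f i · t`. -/
def reesHom {R : Type u} [CommRing R] {ι : Type v} (f : ι → R) :
    MvPolynomial ι R →ₐ[R] Polynomial R :=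
  MvPolynomial.aeval fun i => Polynomial.C (f i) * Polynomial.X

/-- `J`, the defining ideal of the Rees algebra of the ideal generated by `f`. -/
def reesJ {R : Type u} [CommRing R] {ι : Type v} (f : ι → R) :
    Ideal (MvPolynomial ι R) :=
  RingHom.ker (reesHom f)

/-- `L`, the ideal of `T` generated by the linear relations `∑ aᵢ yᵢ` with `∑ aᵢ fᵢ = 0`. -/
def linRel {R : Type u} [CommRing R] {ι : Type v} (f : ι → R) :
    Ideal (MvPolynomial ι R) :=
  Ideal.span {p | ∃ a : ι →₀ R, (a.sum fun i r => r * f i) = 0 ∧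
    p = a.sum fun i r => MvPolynomial.C r * MvPolynomial.X i}

/-- The conductor `C(I) = L :_R J = {r ∈ R : r J ⊆ L}`. -/
def conductorIdeal {R : Type u} [CommRing R] {ι : Type v} (f : ι → R) : Ideal R :=
  Submodule.colon (Submodule.restrictScalars R (linRel f))
    (Submodule.restrictScalars R (reesJ f))

/-- The ideal generated by `f` is of linear type if `J = L`. -/
def IsLinearType {R : Type u} [CommRing R] {ι : Type v} (f : ι → R) : Prop :=
  reesJ f = linRel f

end

/-!
Identify `R[y₁, …, y_m, z]` with `T[z]`, `T = R[y₁, …, y_m]`, where `z ↦ g t`. If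
`F = q₀ + z q'` lies in `J((I, g))`, the degree-`(j+1)` coefficient of the image of `q₀` is
`-g` times the degree-`j` coefficient `c_j` of the image of `q'`; as `I^{j+1} : g = I^{j+1}`,
`c_j ∈ I^{j+1}`, so the image of `q'` is that of some `W = ∑ fᵢ Eᵢ`. With `V = ∑ yᵢ Eᵢ`,
`q₀ + g V ∈ J(I)`, `g V - z W` is a combination of the linear relations `g yᵢ - fᵢ z`, and
`F = (q₀ + g V) - (g V - z W) + z (q' - W)` where `q' - W ∈ J((I, g))` has smaller `z`-degree.
Induction on the `z`-degree gives `C(I) ⊆ C((I, g))`.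

For `g^k`: the relations `g yᵢ ≡ fᵢ z` turn `gᵏ F` into a polynomial `p(z)` over `R`, and
`p(z) ∈ J` forces `gⁿ pₙ = 0`, so `g^{deg p} p(z)` is a combination of the relations `a z` with
`a g = 0`. Since `J((I, g))` is finitely generated, one exponent works for all `F`.
-/

lemma Ideal.exists_pow_mul_mem_of_fg {A : Type*} [CommRing A] {J L : Ideal A} (hJ : J.FG)
    (a : A) (h : ∀ x ∈ J, ∃ k, a ^ k * x ∈ L) : ∃ k, ∀ x ∈ J, a ^ k * x ∈ L := by
  have mono : ∀ {k k' : ℕ} {x : A}, k ≤ k' → a ^ k * x ∈ L → a ^ k' * x ∈ L := by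
    intro k k' x hk hx
    rw [← Nat.sub_add_cancel hk, pow_add, mul_assoc]
    exact L.mul_mem_left _ hx
  induction J, hJ using Submodule.fg_induction with
  | singleton x =>
    obtain ⟨k, hk⟩ := h x (Ideal.mem_span_singleton_self x)
    refine ⟨k, fun y hy => ?_⟩
    obtain ⟨c, rfl⟩ := Ideal.mem_span_singleton'.mp hy
    rw [mul_left_comm]
    exact L.mul_mem_left _ hk
  | sup J₁ J₂ _ _ ih₁ ih₂ =>
    obtain ⟨k₁, hk₁⟩ := ih₁ fun x hx => h x (Ideal.mem_sup_left hx)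
    obtain ⟨k₂, hk₂⟩ := ih₂ fun x hx => h x (Ideal.mem_sup_right hx)
    refine ⟨max k₁ k₂, fun x hx => ?_⟩
    obtain ⟨y₁, hy₁, y₂, hy₂, rfl⟩ := Submodule.mem_sup.mp hx
    rw [mul_add]
    exact L.add_mem (mono (le_max_left _ _) (hk₁ y₁ hy₁)) (mono (le_max_right _ _) (hk₂ y₂ hy₂))

open MvPolynomial

section Rees

variable {R : Type*} [CommRing R] {ι : Type*} (f : ι → R)

@[simp]
lemma reesHom_X (i : ι) : reesHom f (X i) = Polynomial.C (f i) * Polynomial.X := by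
  simp [reesHom]

@[simp]
lemma reesHom_C (a : R) : reesHom f (C a) = Polynomial.C a := by
  simp [reesHom]

lemma reesHom_rename {κ : Type*} (e : κ → ι) (p : MvPolynomial κ R) :
    reesHom f (rename e p) = reesHom (f ∘ e) p := by
  simp only [reesHom, aeval_rename]
  rfl

lemma range_reesHom : (reesHom f).range = reesAlgebra (Ideal.span (Set.range f)) := by
  rw [← adjoin_monomial_eq_reesAlgebra, Submodule.map_span, Algebra.adjoin_span, reesHom,
    aeval_range, ← Set.range_comp]
  congr 2
  ext i
  simp [Polynomial.C_mul_X_eq_monomial]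

lemma mem_conductorIdeal_iff {r : R} :
    r ∈ conductorIdeal f ↔ ∀ p ∈ reesJ f, C r * p ∈ linRel f := by
  simp [conductorIdeal, Submodule.mem_colon, smul_eq_C_mul]

lemma sum_C_mul_X_mem_linRel (a : ι →₀ R) (ha : (a.sum fun i r => r * f i) = 0) :
    (a.sum fun i r => C r * X i) ∈ linRel f :=
  Ideal.subset_span ⟨a, ha, rfl⟩

lemma C_mul_X_sub_C_mul_X_mem_linRel (i j : ι) :
    C (f j) * X i - C (f i) * X j ∈ linRel f := by
  have h := sum_C_mul_X_mem_linRel f (Finsupp.single i (f j) - Finsupp.single j (f i))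
  rw [Finsupp.sum_sub_index (fun _ _ _ => sub_mul _ _ _),
    Finsupp.sum_sub_index (fun _ _ _ => by rw [map_sub, sub_mul]),
    Finsupp.sum_single_index (by simp), Finsupp.sum_single_index (by simp),
    Finsupp.sum_single_index (by simp), Finsupp.sum_single_index (by simp)] at h
  exact h (by ring)

lemma C_mul_X_mem_linRel {a : R} {i : ι} (ha : a * f i = 0) : C a * X i ∈ linRel f := by
  simpa using sum_C_mul_X_mem_linRel f (Finsupp.single i a) (by simpa using ha)

lemma linRel_le_reesJ : linRel f ≤ reesJ f := by
  rw [linRel, Ideal.span_le]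
  rintro _ ⟨a, ha, rfl⟩
  simp only [SetLike.mem_coe, reesJ, RingHom.mem_ker, map_finsuppSum, map_mul, reesHom_C,
    reesHom_X]
  simp only [← mul_assoc, ← Polynomial.C_mul, ← Finsupp.sum_mul, ← map_finsuppSum, ha, map_zero,
    zero_mul]

lemma map_rename_linRel_le {κ : Type*} (e : κ → ι) :
    (linRel (f ∘ e)).map (rename e) ≤ linRel f := by
  rw [linRel, Ideal.map_span, Ideal.span_le]
  rintro _ ⟨_, ⟨a, ha, rfl⟩, rfl⟩
  have key := sum_C_mul_X_mem_linRel f (a.mapDomain e)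
  rw [Finsupp.sum_mapDomain_index (by simp) (fun _ _ _ => add_mul _ _ _),
    Finsupp.sum_mapDomain_index (by simp) (fun _ _ _ => by rw [map_add, add_mul])] at key
  simpa [map_finsuppSum] using key ha

lemma reesHom_sum_X_mul [Fintype ι] (E : ι → MvPolynomial ι R) :
    reesHom f (∑ i, X i * E i) = Polynomial.X * reesHom f (∑ i, C (f i) * E i) := by
  simp only [map_sum, map_mul, reesHom_X, reesHom_C, Finset.mul_sum]
  exact Finset.sum_congr rfl fun _ _ => by ring

lemma exists_reesHom_sum_C_mul_eq [Fintype ι] (p : Polynomial R)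
    (hp : ∀ j, p.coeff j ∈ Ideal.span (Set.range f) ^ (j + 1)) :
    ∃ E : ι → MvPolynomial ι R, reesHom f (∑ i, C (f i) * E i) = p := by
  have hcoeff : ∀ j, ∃ a : ι → R, (∀ i, a i ∈ Ideal.span (Set.range f) ^ j) ∧
      ∑ i, a i * f i = p.coeff j := by
    intro j
    have := hp j
    rw [pow_succ, ← Ideal.smul_eq_mul, Submodule.mem_ideal_smul_span_iff_exists_sum] at this
    obtain ⟨a, ha, hsum⟩ := this
    exact ⟨a, ha, by simpa [Finsupp.sum_fintype] using hsum⟩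
  choose a ha hsum using hcoeff
  have hlift : ∀ i, ∃ E, reesHom f E = ∑ j ∈ p.support, Polynomial.monomial j (a j i) := by
    intro i
    rw [← AlgHom.mem_range, range_reesHom]
    exact Subalgebra.sum_mem _ fun j _ => reesAlgebra.monomial_mem.mpr (ha j i)
  choose E hE using hlift
  refine ⟨E, ?_⟩
  simp only [map_sum, map_mul, reesHom_C, hE, Finset.mul_sum]
  rw [Finset.sum_comm]
  conv_rhs => rw [p.as_sum_support]
  refine Finset.sum_congr rfl fun j _ => ?_
  simp only [Polynomial.C_mul_monomial, ← map_sum, ← hsum j, mul_comm (f _)]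

lemma coeff_mem_pow_succ_of_reesHom_eq (g : R)
    (hreg : ∀ j, (Ideal.span (Set.range f) ^ j).colon (Ideal.span {g}) =
      Ideal.span (Set.range f) ^ j)
    {p : Polynomial R} {q : MvPolynomial ι R}
    (h : Polynomial.C g * Polynomial.X * p + reesHom f q = 0) (j : ℕ) :
    p.coeff j ∈ Ideal.span (Set.range f) ^ (j + 1) := by
  have hq : reesHom f q ∈ reesAlgebra (Ideal.span (Set.range f)) := by
    rw [← range_reesHom]; exact AlgHom.mem_range_self _ _
  have hcoeff := congrArg (Polynomial.coeff · (j + 1)) h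
  simp only [mul_assoc, Polynomial.coeff_add, Polynomial.coeff_C_mul, Polynomial.coeff_X_mul,
    Polynomial.coeff_zero] at hcoeff
  rw [← hreg, Submodule.mem_colon_span_singleton, smul_eq_mul, mul_comm,
    eq_neg_of_add_eq_zero_left hcoeff, neg_mem_iff]
  exact (mem_reesAlgebra_iff _ _).mp hq _

lemma exists_C_pow_mul_sub_aeval_mem_linRel (i₀ : ι) (F : MvPolynomial ι R) :
    ∃ (k : ℕ) (p : Polynomial R),
      C (f i₀ ^ k) * F - Polynomial.aeval (X i₀) p ∈ linRel f := by
  induction F using MvPolynomial.induction_on with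
  | C a => exact ⟨0, Polynomial.C a, by simp⟩
  | add F₁ F₂ h₁ h₂ =>
    obtain ⟨k₁, p₁, hp₁⟩ := h₁
    obtain ⟨k₂, p₂, hp₂⟩ := h₂
    refine ⟨k₁ + k₂, Polynomial.C (f i₀ ^ k₂) * p₁ + Polynomial.C (f i₀ ^ k₁) * p₂, ?_⟩
    have key : C (f i₀ ^ (k₁ + k₂)) * (F₁ + F₂) - Polynomial.aeval (X i₀)
        (Polynomial.C (f i₀ ^ k₂) * p₁ + Polynomial.C (f i₀ ^ k₁) * p₂) =
        C (f i₀ ^ k₂) * (C (f i₀ ^ k₁) * F₁ - Polynomial.aeval (X i₀) p₁) +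
        C (f i₀ ^ k₁) * (C (f i₀ ^ k₂) * F₂ - Polynomial.aeval (X i₀) p₂) := by
      simp only [map_add, map_mul, Polynomial.aeval_C, pow_add, algebraMap_eq]
      ring
    rw [key]
    exact add_mem (Ideal.mul_mem_left _ _ hp₁) (Ideal.mul_mem_left _ _ hp₂)
  | mul_X F i h =>
    obtain ⟨k, p, hp⟩ := h
    refine ⟨k + 1, p * Polynomial.C (f i) * Polynomial.X, ?_⟩
    have key : C (f i₀ ^ (k + 1)) * (F * X i) -
        Polynomial.aeval (X i₀) (p * Polynomial.C (f i) * Polynomial.X) =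
        C (f i₀) * X i * (C (f i₀ ^ k) * F - Polynomial.aeval (X i₀) p) +
        Polynomial.aeval (X i₀) p * (C (f i₀) * X i - C (f i) * X i₀) := by
      simp only [map_mul, Polynomial.aeval_C, Polynomial.aeval_X, algebraMap_eq, pow_succ]
      ring
    rw [key]
    exact add_mem (Ideal.mul_mem_left _ _ hp)
      (Ideal.mul_mem_left _ _ (C_mul_X_sub_C_mul_X_mem_linRel f i i₀))

lemma C_pow_mul_aeval_mem_linRel {i₀ : ι} {p : Polynomial R}
    (hp : Polynomial.aeval (X i₀) p ∈ reesJ f) :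
    C (f i₀ ^ p.natDegree) * Polynomial.aeval (X i₀) p ∈ linRel f := by
  have hcoeff : ∀ n, p.coeff n * f i₀ ^ n = 0 := by
    rw [reesJ, RingHom.mem_ker, ← Polynomial.aeval_algHom_apply, reesHom_X,
      ← Polynomial.comp_eq_aeval] at hp
    simpa using fun n => congrArg (Polynomial.coeff · n) hp
  rw [Polynomial.aeval_eq_sum_range, Finset.mul_sum]
  refine Ideal.sum_mem _ fun n hn => ?_
  rw [smul_eq_C_mul]
  cases n with
  | zero => simp [by simpa using hcoeff 0]
  | succ n =>
    obtain ⟨d, hd⟩ := Nat.exists_eq_add_of_le (Nat.lt_succ_iff.mp (Finset.mem_range.mp hn))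
    have hrel : C (p.coeff (n + 1) * f i₀ ^ n) * X i₀ ∈ linRel f :=
      C_mul_X_mem_linRel f (by rw [mul_assoc, ← pow_succ, hcoeff])
    rw [hd, show C (f i₀ ^ (n + 1 + d)) * (C (p.coeff (n + 1)) * X i₀ ^ (n + 1)) =
      C (f i₀ ^ (d + 1)) * X i₀ ^ n * (C (p.coeff (n + 1) * f i₀ ^ n) * X i₀) by
        simp only [map_mul, map_pow]; ring]
    exact Ideal.mul_mem_left _ _ hrel

lemma exists_C_pow_mul_mem_linRel (i₀ : ι) {F : MvPolynomial ι R} (hF : F ∈ reesJ f) :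
    ∃ k, C (f i₀ ^ k) * F ∈ linRel f := by
  obtain ⟨k, p, hp⟩ := exists_C_pow_mul_sub_aeval_mem_linRel f i₀ F
  have hpJ : Polynomial.aeval (X i₀) p ∈ reesJ f := by
    simpa using sub_mem (Ideal.mul_mem_left _ (C (f i₀ ^ k)) hF) (linRel_le_reesJ f hp)
  refine ⟨p.natDegree + k, ?_⟩
  rw [pow_add, map_mul, mul_assoc,
    ← sub_add_cancel (C (f i₀ ^ k) * F) (Polynomial.aeval (X i₀) p), mul_add]
  exact add_mem (Ideal.mul_mem_left _ _ hp) (C_pow_mul_aeval_mem_linRel f hpJ)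

end Rees

theorem exists_pow_mem_conductorIdeal {R : Type*} [CommRing R] [IsNoetherianRing R] {ι : Type*}
    [Finite ι] (f : ι → R) (i₀ : ι) : ∃ k, f i₀ ^ k ∈ conductorIdeal f := by
  obtain ⟨k, hk⟩ := Ideal.exists_pow_mul_mem_of_fg (IsNoetherian.noetherian (reesJ f)) (C (f i₀))
    fun F hF => by simpa using exists_C_pow_mul_mem_linRel f i₀ hF
  exact ⟨k, (mem_conductorIdeal_iff f).mpr fun F hF => by simpa using hk F hF⟩

section Snoc

variable {R : Type*} [CommRing R] {m : ℕ}

variable (R m) in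
noncomputable def lastEquiv :
    MvPolynomial (Fin (m + 1)) R ≃ₐ[R] Polynomial (MvPolynomial (Fin m) R) :=
  (renameEquiv R finSuccEquivLast).trans (optionEquivLeft R (Fin m))

lemma lastEquiv_symm_C (p : MvPolynomial (Fin m) R) :
    (lastEquiv R m).symm (Polynomial.C p) = rename Fin.castSucc p := by
  induction p using MvPolynomial.induction_on with
  | C a => simp [lastEquiv]
  | add p q hp hq => simp only [map_add, hp, hq]
  | mul_X p i hp =>
    simp only [map_mul, hp, rename_X]
    simp [lastEquiv]

lemma lastEquiv_symm_X : (lastEquiv R m).symm Polynomial.X = X (Fin.last m) := by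
  simp [lastEquiv]

variable (f : Fin m → R) (g : R)

lemma reesHom_snoc_rename_castSucc (p : MvPolynomial (Fin m) R) :
    reesHom (Fin.snoc f g) (rename Fin.castSucc p) = reesHom f p := by
  rw [reesHom_rename, Fin.snoc_comp_castSucc]

lemma rename_castSucc_mem_linRel_snoc {p : MvPolynomial (Fin m) R} (hp : p ∈ linRel f) :
    rename Fin.castSucc p ∈ linRel (Fin.snoc f g) := by
  apply map_rename_linRel_le (Fin.snoc f g) Fin.castSucc
  rw [Fin.snoc_comp_castSucc]
  exact Ideal.mem_map_of_mem _ hp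

lemma C_mul_rename_castSucc_mem_linRel_snoc {r : R} (hr : r ∈ conductorIdeal f)
    {p : MvPolynomial (Fin m) R} (hp : rename Fin.castSucc p ∈ reesJ (Fin.snoc f g)) :
    C r * rename Fin.castSucc p ∈ linRel (Fin.snoc f g) := by
  rw [reesJ, RingHom.mem_ker, reesHom_snoc_rename_castSucc] at hp
  rw [← rename_C Fin.castSucc, ← map_mul]
  exact rename_castSucc_mem_linRel_snoc f g ((mem_conductorIdeal_iff f).mp hr p hp)

lemma C_mul_X_castSucc_sub_C_mul_X_last_mem_linRel (i : Fin m) :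
    C g * X i.castSucc - C (f i) * X (Fin.last m) ∈ linRel (Fin.snoc f g) := by
  simpa using C_mul_X_sub_C_mul_X_mem_linRel (Fin.snoc f g) i.castSucc (Fin.last m)

lemma C_mul_rename_sum_X_mul_sub_mem_linRel (E : Fin m → MvPolynomial (Fin m) R) :
    C g * rename Fin.castSucc (∑ i, X i * E i) -
      X (Fin.last m) * rename Fin.castSucc (∑ i, C (f i) * E i) ∈ linRel (Fin.snoc f g) := by
  have key : C g * rename Fin.castSucc (∑ i, X i * E i) -
      X (Fin.last m) * rename Fin.castSucc (∑ i, C (f i) * E i) =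
      ∑ i, rename Fin.castSucc (E i) * (C g * X i.castSucc - C (f i) * X (Fin.last m)) := by
    simp only [map_sum, map_mul, rename_X, rename_C, Finset.mul_sum, ← Finset.sum_sub_distrib]
    exact Finset.sum_congr rfl fun _ _ => by ring
  rw [key]
  exact Ideal.sum_mem _ fun i _ =>
    Ideal.mul_mem_left _ _ (C_mul_X_castSucc_sub_C_mul_X_last_mem_linRel f g i)

lemma exists_sub_rename_add_X_last_mul_mem_linRel
    (hreg : ∀ j, (Ideal.span (Set.range f) ^ j).colon (Ideal.span {g}) =
      Ideal.span (Set.range f) ^ j)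
    (q : Polynomial (MvPolynomial (Fin m) R))
    (hq : (lastEquiv R m).symm q ∈ reesJ (Fin.snoc f g)) :
    ∃ p ∈ reesJ f, ∃ q' : Polynomial (MvPolynomial (Fin m) R),
      q'.natDegree ≤ q.natDegree - 1 ∧ (lastEquiv R m).symm q' ∈ reesJ (Fin.snoc f g) ∧
      (lastEquiv R m).symm q -
        (rename Fin.castSucc p + X (Fin.last m) * (lastEquiv R m).symm q') ∈
        linRel (Fin.snoc f g) := by
  set ψ := (lastEquiv R m).symm
  have hψq : ψ q = rename Fin.castSucc (q.coeff 0) + X (Fin.last m) * ψ q.divX := by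
    conv_lhs => rw [← q.X_mul_divX_add]
    rw [map_add, map_mul, lastEquiv_symm_X, lastEquiv_symm_C]
    exact add_comm _ _
  have hsum : Polynomial.C g * Polynomial.X * reesHom (Fin.snoc f g) (ψ q.divX) +
      reesHom f (q.coeff 0) = 0 := by
    rw [reesJ, RingHom.mem_ker, hψq, map_add, map_mul, reesHom_snoc_rename_castSucc, reesHom_X,
      Fin.snoc_last] at hq
    linear_combination hq
  obtain ⟨E, hE⟩ :=
    exists_reesHom_sum_C_mul_eq f _ (coeff_mem_pow_succ_of_reesHom_eq f g hreg hsum)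
  refine ⟨q.coeff 0 + C g * ∑ i, X i * E i, ?_, q.divX - Polynomial.C (∑ i, C (f i) * E i),
    ?_, ?_, ?_⟩
  · rw [reesJ, RingHom.mem_ker, map_add, map_mul, reesHom_C, reesHom_sum_X_mul, hE]
    linear_combination hsum
  · refine (Polynomial.natDegree_sub_le _ _).trans ?_
    rw [Polynomial.natDegree_C, Polynomial.natDegree_divX_eq_natDegree_tsub_one]
    omega
  · rw [reesJ, RingHom.mem_ker, map_sub, map_sub, lastEquiv_symm_C, reesHom_snoc_rename_castSucc,
      hE, sub_self]
  · have key : ψ q - (rename Fin.castSucc (q.coeff 0 + C g * ∑ i, X i * E i) +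
        X (Fin.last m) * ψ (q.divX - Polynomial.C (∑ i, C (f i) * E i))) =
        -(C g * rename Fin.castSucc (∑ i, X i * E i) -
          X (Fin.last m) * rename Fin.castSucc (∑ i, C (f i) * E i)) := by
      rw [hψq, map_sub, lastEquiv_symm_C, map_add, map_mul, rename_C]
      ring
    rw [key, neg_mem_iff]
    exact C_mul_rename_sum_X_mul_sub_mem_linRel f g E

theorem conductorIdeal_le_conductorIdeal_snoc
    (hreg : ∀ j, (Ideal.span (Set.range f) ^ j).colon (Ideal.span {g}) =
      Ideal.span (Set.range f) ^ j) :
    conductorIdeal f ≤ conductorIdeal (Fin.snoc f g) := by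
  intro r hr
  rw [mem_conductorIdeal_iff]
  suffices H : ∀ n (q : Polynomial (MvPolynomial (Fin m) R)), q.natDegree ≤ n →
      (lastEquiv R m).symm q ∈ reesJ (Fin.snoc f g) →
      C r * (lastEquiv R m).symm q ∈ linRel (Fin.snoc f g) by
    intro F hF
    simpa using H _ (lastEquiv R m F) le_rfl (by simpa using hF)
  intro n
  induction n with
  | zero =>
    intro q hdeg hq
    rw [Polynomial.eq_C_of_natDegree_le_zero hdeg, lastEquiv_symm_C] at hq ⊢
    exact C_mul_rename_castSucc_mem_linRel_snoc f g hr hq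
  | succ n ih =>
    intro q hdeg hq
    obtain ⟨p, hp, q', hdeg', hq', hdiff⟩ :=
      exists_sub_rename_add_X_last_mul_mem_linRel f g hreg q hq
    have hp' : rename Fin.castSucc p ∈ reesJ (Fin.snoc f g) := by
      rwa [reesJ, RingHom.mem_ker, reesHom_snoc_rename_castSucc]
    rw [← sub_add_cancel ((lastEquiv R m).symm q) (rename Fin.castSucc p + _), mul_add, mul_add,
      mul_left_comm]
    exact add_mem (Ideal.mul_mem_left _ _ hdiff) (add_mem
      (C_mul_rename_castSucc_mem_linRel_snoc f g hr hp')
      (Ideal.mul_mem_left _ _ (ih q' (by omega) hq')))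

end Snoc

/-- Let `R` be Noetherian, `I = (f₁,…,f_m)` an ideal and `g ∈ R`
with `Iʲ : g = Iʲ` for all `j ≥ 0`.  Then there is `k > 0` with
`(C(I), gᵏ) ⊆ C((I, g))`; in particular, if `I` is of linear type (`C(I) = R`),
then `(I, g)` is of linear type. -/
theorem stmt_12 {R : Type} [CommRing R] [IsNoetherianRing R] {m : ℕ}
    (f : Fin m → R) (I : Ideal R) (hI : I = Ideal.span (Set.range f)) (g : R)
    (hreg : ∀ j : ℕ, (I ^ j).colon (Ideal.span {g}) = I ^ j) :
    (∃ k : ℕ, 0 < k ∧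
      conductorIdeal f ⊔ Ideal.span {g ^ k} ≤ conductorIdeal (Fin.snoc f g)) ∧
    (conductorIdeal f = ⊤ → conductorIdeal (Fin.snoc f g) = ⊤) := by
  subst hI
  have hle := conductorIdeal_le_conductorIdeal_snoc f g hreg
  obtain ⟨k, hk⟩ := exists_pow_mem_conductorIdeal (Fin.snoc f g) (Fin.last m)
  rw [Fin.snoc_last] at hk
  refine ⟨⟨k + 1, k.succ_pos, sup_le hle ?_⟩, fun htop => top_le_iff.mp (htop ▸ hle)⟩
  rw [Ideal.span_singleton_le_iff_mem, pow_succ]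
  exact Ideal.mul_mem_right _ _ hk
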